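/- For every shape transformation φ of ℝ^n and every smooth metric g of degenerate Kundt shape, the pullback φ*g is again a smooth metric of degenerate Kundt shape; that is, shape transformations preserve the class of degenerate Kundt-shaped metrics (Theorem 2). -/

import Mathlib

open Matrix

noncomputable section

/-- We work on `ℝ^(n+3)` (so the dimension is an arbitrary integer `≥ 3`), with coordinates
`(u, x^1, …, x^{n+1}, v)`. Index of the coordinate `u`. -/
def uIdx (n : ℕ) : Fin (n + 3) := 0

/-- Index of the coordinate `v`. -/
def vIdx (n : ℕ) : Fin (n + 3) := Fin.last (n + 2)

/-- Index of the coordinate `x^i`. -/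
def xIdx (n : ℕ) (i : Fin (n + 1)) : Fin (n + 3) := ⟨i.val + 1, by omega⟩

/-- Partial derivative of a scalar function `f` on `ℝ^(n+3)` in the `j`-th coordinate at `p`. -/
def partialDeriv' (n : ℕ) (f : (Fin (n + 3) → ℝ) → ℝ) (j : Fin (n + 3))
    (p : Fin (n + 3) → ℝ) : ℝ :=
  deriv (fun t => f (Function.update p j t)) (p j)

/-- A smooth metric of Kundt shape on `ℝ^(n+3)`. -/
structure IsKundtShape (n : ℕ)
    (g : (Fin (n + 3) → ℝ) → Matrix (Fin (n + 3)) (Fin (n + 3)) ℝ) : Prop where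
  smooth : ∀ i j, ContDiff ℝ (⊤ : ℕ∞) fun p => g p i j
  symm : ∀ p, (g p).IsSymm
  vv : ∀ p, g p (vIdx n) (vIdx n) = 0
  xv : ∀ p i, g p (xIdx n i) (vIdx n) = 0
  uv : ∀ p, g p (uIdx n) (vIdx n) = 1
  posDef : ∀ p, (Matrix.of fun i j : Fin (n + 1) => g p (xIdx n i) (xIdx n j)).PosDef
  vIndep : ∀ p i j, partialDeriv' n (fun q => g q (xIdx n i) (xIdx n j)) (vIdx n) p = 0

/-- A shape transformation `φ(u,x,v) = (C(u), A(u,x), v/C'(u) + B(u,x))`. -/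
def IsShapeTransform (n : ℕ) (φ : (Fin (n + 3) → ℝ) → Fin (n + 3) → ℝ) : Prop :=
  ∃ (C : ℝ → ℝ) (A : ℝ → (Fin (n + 1) → ℝ) → Fin (n + 1) → ℝ) (B : ℝ → (Fin (n + 1) → ℝ) → ℝ),
    ContDiff ℝ (⊤ : ℕ∞) C ∧
    (∀ i, ContDiff ℝ (⊤ : ℕ∞) fun q : ℝ × (Fin (n + 1) → ℝ) => A q.1 q.2 i) ∧
    ContDiff ℝ (⊤ : ℕ∞) (fun q : ℝ × (Fin (n + 1) → ℝ) => B q.1 q.2) ∧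
    (∀ u, deriv C u ≠ 0) ∧
    (∀ u x, IsUnit (Matrix.of fun i j : Fin (n + 1) =>
        deriv (fun t => A u (Function.update x j t) i) (x j))) ∧
    (∀ p, φ p (uIdx n) = C (p (uIdx n))) ∧
    (∀ p i, φ p (xIdx n i) = A (p (uIdx n)) (fun j => p (xIdx n j)) i) ∧
    (∀ p, φ p (vIdx n) =
      p (vIdx n) / deriv C (p (uIdx n)) + B (p (uIdx n)) (fun j => p (xIdx n j)))

/-- The Jacobian matrix `Dφ_p` of `φ` at `p`. -/
def jacobianMatrix (n : ℕ) (φ : (Fin (n + 3) → ℝ) → Fin (n + 3) → ℝ)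
    (p : Fin (n + 3) → ℝ) : Matrix (Fin (n + 3)) (Fin (n + 3)) ℝ :=
  Matrix.of fun i j => partialDeriv' n (fun q => φ q i) j p

/-- The pullback metric `(φ*g)(p) = (Dφ_p)ᵀ · g(φ(p)) · Dφ_p`. -/
def pullbackMetric (n : ℕ) (φ : (Fin (n + 3) → ℝ) → Fin (n + 3) → ℝ)
    (g : (Fin (n + 3) → ℝ) → Matrix (Fin (n + 3)) (Fin (n + 3)) ℝ)
    (p : Fin (n + 3) → ℝ) : Matrix (Fin (n + 3)) (Fin (n + 3)) ℝ :=
  (jacobianMatrix n φ p)ᵀ * g (φ p) * jacobianMatrix n φ p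

/-- A smooth metric of degenerate Kundt shape: a metric of Kundt shape such that additionally
`∂²_v g_{u x^i} ≡ 0` for all `i` and `∂³_v g_{uu} ≡ 0`. -/
def IsDegenerateKundtShape (n : ℕ)
    (g : (Fin (n + 3) → ℝ) → Matrix (Fin (n + 3)) (Fin (n + 3)) ℝ) : Prop :=
  IsKundtShape n g ∧
  (∀ p (i : Fin (n + 1)),
    deriv (deriv (fun t => g (Function.update p (vIdx n) t) (uIdx n) (xIdx n i)))
      (p (vIdx n)) = 0) ∧
  (∀ p,
    deriv (deriv (deriv (fun t => g (Function.update p (vIdx n) t) (uIdx n) (uIdx n))))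
      (p (vIdx n)) = 0)

/-!
Give the coordinates the weights `w u = 1`, `w xⁱ = 0`, `w v = -1`. A smooth symmetric `g` with
`g_uv = 1` and positive definite `x`-block is of degenerate Kundt shape exactly when, along
every `v`-line, each entry `g_ij` is a polynomial in `v` of degree at most `w i + w j` (a negative
bound meaning that the entry vanishes). A shape transformation maps `v`-lines affinely onto
`v`-lines, so `g ∘ φ` keeps these bounds, while the Jacobian entry `∂_a φⁱ` has `v`-degree at most
`w a - w i`. Every summand of `(φ*g)_ab = ∑ ∂_a φⁱ g_ij(φ) ∂_b φʲ` therefore has degree at most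
`w a + w b`. The pointwise conditions survive because the `v`-column of `Dφ` is `(0, …, 0, 1/C')`,
which gives `(φ*g)_uv = C' ⋅ 1 ⋅ 1/C'`, and the `x`-block of `φ*g` is the congruence of `g_xx` by
the invertible matrix `∂A/∂x`.
-/

open Function
open scoped ContDiff

/-- `f` is a polynomial of degree at most `d`; for `d < 0` this forces `f = 0`. -/
def PolyDegLE (d : ℤ) (f : ℝ → ℝ) : Prop :=
  ContDiff ℝ ∞ f ∧ ∀ k : ℕ, d < k → iteratedDeriv k f = 0

namespace PolyDegLE

variable {d e : ℤ} {f g : ℝ → ℝ}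

lemma contDiffAt (h : PolyDegLE d f) (k : ℕ) (x : ℝ) : ContDiffAt ℝ k f x :=
  h.1.contDiffAt.of_le (by exact_mod_cast le_top)

lemma of_iteratedDeriv_eq_zero {k : ℕ} (hf : ContDiff ℝ ∞ f) (h : iteratedDeriv k f = 0)
    (hk : k ≤ d + 1) : PolyDegLE d f := by
  refine ⟨hf, fun m hm => ?_⟩
  obtain ⟨j, rfl⟩ := Nat.exists_eq_add_of_le (show k ≤ m by omega)
  clear hm
  induction j with
  | zero => exact h
  | succ j ih => rw [← add_assoc, iteratedDeriv_succ, ih]; simp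

lemma mono (h : PolyDegLE d f) (hde : d ≤ e) : PolyDegLE e f :=
  ⟨h.1, fun k hk => h.2 k (hde.trans_lt hk)⟩

lemma zero (d : ℤ) : PolyDegLE d fun _ => 0 :=
  ⟨contDiff_const, fun k _ => funext fun x => by simp⟩

lemma const (hd : 0 ≤ d) (c : ℝ) : PolyDegLE d fun _ => c :=
  ⟨contDiff_const, fun k hk => funext fun x => by rw [iteratedDeriv_const, if_neg (by omega)]; rfl⟩

lemma id : PolyDegLE 1 fun t => t :=
  ⟨contDiff_id, fun k hk => funext fun x => by
    rw [iteratedDeriv_fun_id, if_neg (by omega), if_neg (by omega)]; rfl⟩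

lemma sum {ι : Type*} (s : Finset ι) {f : ι → ℝ → ℝ} (h : ∀ i ∈ s, PolyDegLE d (f i)) :
    PolyDegLE d fun t => ∑ i ∈ s, f i t := by
  refine ⟨ContDiff.sum fun i hi => (h i hi).1, fun k hk => funext fun x => ?_⟩
  rw [iteratedDeriv_fun_sum fun i hi => (h i hi).contDiffAt k x]
  exact Finset.sum_eq_zero fun i hi => by rw [(h i hi).2 k hk]; rfl

lemma mul (hf : PolyDegLE d f) (hg : PolyDegLE e g) : PolyDegLE (d + e) fun t => f t * g t := by
  refine ⟨hf.1.mul hg.1, fun k hk => funext fun x => ?_⟩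
  rw [iteratedDeriv_fun_mul (hf.contDiffAt k x) (hg.contDiffAt k x)]
  refine Finset.sum_eq_zero fun i hi => ?_
  rw [Finset.mem_range] at hi
  rcases lt_or_ge d i with hdi | hid
  · simp [hf.2 i hdi]
  · simp [hg.2 (k - i) (by push_cast [Nat.cast_sub (show i ≤ k by omega)]; omega)]

lemma comp_affine (h : PolyDegLE d f) (a b : ℝ) : PolyDegLE d fun t => f (a * t + b) := by
  have hshift : ContDiff ℝ ∞ fun s => f (s + b) := h.1.comp (contDiff_id.add contDiff_const)
  refine ⟨hshift.comp (contDiff_const.mul contDiff_id), fun k hk => ?_⟩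
  rw [iteratedDeriv_comp_const_mul (f := fun s => f (s + b))
    (hshift.of_le (by exact_mod_cast le_top)) a, iteratedDeriv_comp_add_const, h.2 k hk]
  funext; simp

lemma transpose_mul_mul {ι : Type*} [Fintype ι] (w : ι → ℤ) {D G : ℝ → Matrix ι ι ℝ}
    (hD : ∀ i a, PolyDegLE (w a - w i) fun t => D t i a)
    (hG : ∀ i j, PolyDegLE (w i + w j) fun t => G t i j) (a b : ι) :
    PolyDegLE (w a + w b) fun t => ((D t)ᵀ * G t * D t) a b := by
  simp only [Matrix.mul_apply, Matrix.transpose_apply, Finset.sum_mul]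
  refine sum _ fun j _ => sum _ fun i _ => ?_
  have h := ((hD i a).mul (hG i j)).mul (hD j b)
  rwa [show w a - w i + (w i + w j) + (w b - w j) = w a + w b by ring] at h

end PolyDegLE

section Coordinates

variable {n : ℕ}

lemma uIdx_ne_vIdx : uIdx n ≠ vIdx n := by
  simp [uIdx, vIdx, Fin.ext_iff, Fin.last]

lemma xIdx_ne_uIdx (k : Fin (n + 1)) : xIdx n k ≠ uIdx n :=
  Fin.ne_of_val_ne (by simp [xIdx, uIdx])

lemma xIdx_ne_vIdx (k : Fin (n + 1)) : xIdx n k ≠ vIdx n := by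
  simp [xIdx, vIdx, Fin.ext_iff]; omega

lemma xIdx_injective : Injective (xIdx n) := by
  intro k l h; simpa [xIdx, Fin.ext_iff] using h

lemma eq_uIdx_or_xIdx_or_vIdx (i : Fin (n + 3)) :
    i = uIdx n ∨ (∃ k, i = xIdx n k) ∨ i = vIdx n := by
  rcases i with ⟨m, hm⟩
  rcases Nat.eq_zero_or_pos m with rfl | hpos
  · exact Or.inl rfl
  · by_cases hlast : m = n + 2
    · exact Or.inr (Or.inr (by simp [vIdx, Fin.ext_iff, hlast]))
    · exact Or.inr (Or.inl ⟨⟨m - 1, by omega⟩, by simp [xIdx, Fin.ext_iff]; omega⟩)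

lemma sum_univ_eq_uIdx_add_xIdx_add_vIdx {M : Type*} [AddCommMonoid M] (f : Fin (n + 3) → M) :
    ∑ i, f i = f (uIdx n) + ∑ k, f (xIdx n k) + f (vIdx n) := by
  rw [Fin.sum_univ_succ, Fin.sum_univ_castSucc, ← add_assoc]
  rfl

lemma update_vIdx_comp_xIdx (p : Fin (n + 3) → ℝ) (t : ℝ) :
    (fun k => update p (vIdx n) t (xIdx n k)) = fun k => p (xIdx n k) :=
  funext fun k => update_of_ne (xIdx_ne_vIdx k) _ _

lemma update_xIdx_comp_xIdx (p : Fin (n + 3) → ℝ) (l : Fin (n + 1)) (t : ℝ) :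
    (fun k => update p (xIdx n l) t (xIdx n k)) = update (fun k => p (xIdx n k)) l t := by
  funext k
  by_cases h : k = l
  · subst h; simp
  · rw [update_of_ne (xIdx_injective.ne h), update_of_ne h]

def vWeight (n : ℕ) (i : Fin (n + 3)) : ℤ :=
  if i = uIdx n then 1 else if i = vIdx n then -1 else 0

@[simp] lemma vWeight_uIdx : vWeight n (uIdx n) = 1 := if_pos rfl

@[simp] lemma vWeight_xIdx (k : Fin (n + 1)) : vWeight n (xIdx n k) = 0 := by
  simp [vWeight, xIdx_ne_uIdx, xIdx_ne_vIdx]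

@[simp] lemma vWeight_vIdx : vWeight n (vIdx n) = -1 := by
  simp [vWeight, uIdx_ne_vIdx.symm]

lemma vWeight_nonneg {a : Fin (n + 3)} (ha : a ≠ vIdx n) : 0 ≤ vWeight n a := by
  unfold vWeight; split_ifs <;> simp_all

end Coordinates

section PartialDeriv

variable {n : ℕ} {f : (Fin (n + 3) → ℝ) → ℝ}

lemma partialDeriv'_eq_zero_of_update_eq {j : Fin (n + 3)} {p : Fin (n + 3) → ℝ}
    (h : ∀ s, f (update p j s) = f p) : partialDeriv' n f j p = 0 := by
  simp [partialDeriv', h]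

lemma partialDeriv'_update_eq_of_update_eq {j : Fin (n + 3)}
    (hf : ∀ q s, f (update q j s) = f q) (a : Fin (n + 3)) (p : Fin (n + 3) → ℝ) (t : ℝ) :
    partialDeriv' n f a (update p j t) = partialDeriv' n f a p := by
  by_cases ha : a = j
  · subst ha
    rw [partialDeriv'_eq_zero_of_update_eq (hf _), partialDeriv'_eq_zero_of_update_eq (hf _)]
  · simp only [partialDeriv', update_of_ne ha, update_comm (Ne.symm ha), hf]

section AffineInCoordinate

variable {h k : (Fin (n + 3) → ℝ) → ℝ} {j : Fin (n + 3)}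

lemma partialDeriv'_self_of_eq_mul_add (hf : ∀ q, f q = q j * h q + k q)
    (hh : ∀ q s, h (update q j s) = h q) (hk : ∀ q s, k (update q j s) = k q)
    (p : Fin (n + 3) → ℝ) : partialDeriv' n f j p = h p := by
  have hline : (fun s => f (update p j s)) = fun s => s * h p + k p :=
    funext fun s => by rw [hf, update_self, hh, hk]
  simp [partialDeriv', hline]

lemma partialDeriv'_update_of_eq_mul_add {a : Fin (n + 3)} (ha : a ≠ j)
    (hf : ∀ q, f q = q j * h q + k q)
    (hh : ∀ q s, h (update q j s) = h q) (hk : ∀ q s, k (update q j s) = k q)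
    (hhd : Differentiable ℝ h) (hkd : Differentiable ℝ k) (p : Fin (n + 3) → ℝ) (t : ℝ) :
    partialDeriv' n f a (update p j t) = partialDeriv' n h a p * t + partialDeriv' n k a p := by
  have hline : (fun s => f (update (update p j t) a s))
      = fun s => h (update p a s) * t + k (update p a s) :=
    funext fun s => by rw [hf, update_comm ha.symm, update_self, hh, hk, mul_comm]
  have hdiff : ∀ F : (Fin (n + 3) → ℝ) → ℝ, Differentiable ℝ F →
      DifferentiableAt ℝ (fun s => F (update p a s)) (p a) :=
    fun F hF => (hF _).comp _ (hasDerivAt_update p a _).differentiableAt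
  rw [partialDeriv', hline, update_of_ne ha,
    deriv_fun_add ((hdiff h hhd).mul_const t) (hdiff k hkd), deriv_mul_const (hdiff h hhd)]
  rfl

end AffineInCoordinate

end PartialDeriv

section WeightedVDegree

variable {n : ℕ} {g : (Fin (n + 3) → ℝ) → Matrix (Fin (n + 3)) (Fin (n + 3)) ℝ}

def HasWeightedVDegree (n : ℕ)
    (g : (Fin (n + 3) → ℝ) → Matrix (Fin (n + 3)) (Fin (n + 3)) ℝ) : Prop :=
  ∀ p i j, PolyDegLE (vWeight n i + vWeight n j) fun t => g (update p (vIdx n) t) i j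

lemma polyDegLE_update_of_iteratedDeriv_eq_zero {m : ℕ} {f : (Fin m → ℝ) → ℝ} {j : Fin m}
    {d : ℤ} {k : ℕ} (hf : ContDiff ℝ ∞ f)
    (h : ∀ p, iteratedDeriv k (fun t => f (update p j t)) (p j) = 0) (hk : k ≤ d + 1)
    (p : Fin m → ℝ) : PolyDegLE d fun t => f (update p j t) :=
  .of_iteratedDeriv_eq_zero (hf.comp (contDiff_update _ p j))
    (funext fun s => by simpa using h (update p j s)) hk

theorem IsDegenerateKundtShape.hasWeightedVDegree (hg : IsDegenerateKundtShape n g) :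
    HasWeightedVDegree n g := by
  obtain ⟨hK, hux, huu⟩ := hg
  intro p
  have swap : ∀ i j,
      (fun t => g (update p (vIdx n) t) j i) = fun t => g (update p (vIdx n) t) i j :=
    fun i j => funext fun t => (hK.symm _).apply i j
  have huu' : PolyDegLE 2 fun t => g (update p (vIdx n) t) (uIdx n) (uIdx n) :=
    polyDegLE_update_of_iteratedDeriv_eq_zero (f := fun q => g q (uIdx n) (uIdx n)) (k := 3)
      (hK.smooth _ _) (fun q => by simpa [iteratedDeriv_succ] using huu q) (by norm_num) p
  have hux' : ∀ k, PolyDegLE 1 fun t => g (update p (vIdx n) t) (uIdx n) (xIdx n k) :=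
    fun k => polyDegLE_update_of_iteratedDeriv_eq_zero
      (f := fun q => g q (uIdx n) (xIdx n k)) (k := 2)
      (hK.smooth _ _) (fun q => by simpa [iteratedDeriv_succ] using hux q k) (by norm_num) p
  have hxx' : ∀ k l, PolyDegLE 0 fun t => g (update p (vIdx n) t) (xIdx n k) (xIdx n l) :=
    fun k l => polyDegLE_update_of_iteratedDeriv_eq_zero
      (f := fun q => g q (xIdx n k) (xIdx n l)) (k := 1)
      (hK.smooth _ _) (fun q => by simpa [partialDeriv'] using hK.vIndep q k l) (by norm_num) p
  have huv : PolyDegLE 0 fun t => g (update p (vIdx n) t) (uIdx n) (vIdx n) := by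
    simpa only [hK.uv] using PolyDegLE.const le_rfl 1
  have hxv : ∀ k, PolyDegLE (-1) fun t => g (update p (vIdx n) t) (xIdx n k) (vIdx n) :=
    fun k => by simpa only [hK.xv] using PolyDegLE.zero _
  have hvv : PolyDegLE (-2) fun t => g (update p (vIdx n) t) (vIdx n) (vIdx n) := by
    simpa only [hK.vv] using PolyDegLE.zero _
  intro i j
  rcases eq_uIdx_or_xIdx_or_vIdx i with rfl | ⟨k, rfl⟩ | rfl <;>
    rcases eq_uIdx_or_xIdx_or_vIdx j with rfl | ⟨l, rfl⟩ | rfl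
  · simpa [one_add_one_eq_two] using huu'
  · simpa using hux' l
  · simpa using huv
  · simpa [swap] using hux' k
  · simpa using hxx' k l
  · simpa using hxv k
  · simpa [swap] using huv
  · simpa [swap] using hxv l
  · simpa [show (-1 : ℤ) + -1 = -2 by norm_num] using hvv

theorem IsDegenerateKundtShape.of_hasWeightedVDegree
    (smooth : ∀ i j, ContDiff ℝ (⊤ : ℕ∞) fun p => g p i j) (symm : ∀ p, (g p).IsSymm)
    (uv : ∀ p, g p (uIdx n) (vIdx n) = 1)
    (posDef : ∀ p, (Matrix.of fun i j : Fin (n + 1) => g p (xIdx n i) (xIdx n j)).PosDef)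
    (hw : HasWeightedVDegree n g) : IsDegenerateKundtShape n g := by
  have atBase : ∀ p i j (k : ℕ), vWeight n i + vWeight n j < k →
      iteratedDeriv k (fun t => g (update p (vIdx n) t) i j) (p (vIdx n)) = 0 :=
    fun p i j k hk => congrFun ((hw p i j).2 k hk) _
  refine ⟨⟨smooth, symm, fun p => ?_, fun p k => ?_, uv, posDef, fun p k l => ?_⟩,
    fun p k => ?_, fun p => ?_⟩
  · simpa using atBase p (vIdx n) (vIdx n) 0 (by simp)
  · simpa using atBase p (xIdx n k) (vIdx n) 0 (by simp)
  · simpa [partialDeriv'] using atBase p _ _ 1 (by simp)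
  · simpa [iteratedDeriv_succ] using atBase p (uIdx n) (xIdx n k) 2 (by simp)
  · simpa [iteratedDeriv_succ] using atBase p (uIdx n) (uIdx n) 3 (by norm_num)

end WeightedVDegree

lemma Matrix.transpose_mul_mul_apply_of_eq_zero {ι R : Type*} [Fintype ι] [DecidableEq ι]
    [NonUnitalNonAssocSemiring R] {D G : Matrix ι ι R} {u v b : ι} (hD : ∀ j, j ≠ v → D j b = 0)
    (hG : ∀ i, i ≠ u → G i v = 0) (a : ι) : (Dᵀ * G * D) a b = D u a * G u v * D v b := by
  rw [Matrix.mul_apply, Finset.sum_eq_single v (fun j _ hj => by rw [hD j hj, mul_zero])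
    (by simp), Matrix.mul_apply, Finset.sum_eq_single u (fun i _ hi => by rw [hG i hi, mul_zero])
    (by simp)]
  rfl

section Pullback

variable {n : ℕ} {φ : (Fin (n + 3) → ℝ) → Fin (n + 3) → ℝ}
  {g : (Fin (n + 3) → ℝ) → Matrix (Fin (n + 3)) (Fin (n + 3)) ℝ}

lemma contDiff_partialDeriv' {f : (Fin (n + 3) → ℝ) → ℝ} (hf : ContDiff ℝ ∞ f)
    (j : Fin (n + 3)) : ContDiff ℝ ∞ fun p => partialDeriv' n f j p := by
  have hfd : Differentiable ℝ f := hf.differentiable (by simp)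
  have h : (fun p => partialDeriv' n f j p) = fun p => fderiv ℝ f p (Pi.single j 1) := by
    funext p
    have hf' : HasFDerivAt f (fderiv ℝ f p) (update p j (p j)) := by
      rw [update_eq_self]; exact (hfd p).hasFDerivAt
    exact (hf'.comp_hasDerivAt (p j) (hasDerivAt_update p j (p j))).deriv
  rw [h]
  exact (hf.fderiv_right (by exact_mod_cast le_top)).clm_apply contDiff_const

lemma pullbackMetric_apply (p : Fin (n + 3) → ℝ) (a b : Fin (n + 3)) :
    pullbackMetric n φ g p a b = ∑ i, ∑ j,
      jacobianMatrix n φ p i a * g (φ p) i j * jacobianMatrix n φ p j b := by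
  simp only [pullbackMetric, Matrix.mul_apply, Matrix.transpose_apply, Finset.sum_mul]
  exact Finset.sum_comm

lemma contDiff_pullbackMetric_apply (hφ : ContDiff ℝ ∞ φ)
    (hg : ∀ i j, ContDiff ℝ ∞ fun p => g p i j) (a b : Fin (n + 3)) :
    ContDiff ℝ ∞ fun p => pullbackMetric n φ g p a b := by
  have hD : ∀ i a, ContDiff ℝ ∞ fun p => jacobianMatrix n φ p i a := fun i a =>
    contDiff_partialDeriv' ((contDiff_apply ℝ ℝ i).comp hφ) a
  simp only [pullbackMetric_apply]
  exact ContDiff.sum fun i _ => ContDiff.sum fun j _ =>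
    ((hD i a).mul ((hg i j).comp hφ)).mul (hD j b)

lemma pullbackMetric_isSymm {p : Fin (n + 3) → ℝ} (hg : (g (φ p)).IsSymm) :
    (pullbackMetric n φ g p).IsSymm := by
  rw [Matrix.IsSymm, pullbackMetric, Matrix.transpose_mul, Matrix.transpose_mul,
    Matrix.transpose_transpose, hg.eq, Matrix.mul_assoc]

end Pullback

namespace IsKundtShape

variable {n : ℕ} {g : (Fin (n + 3) → ℝ) → Matrix (Fin (n + 3)) (Fin (n + 3)) ℝ}

lemma vIdx_xIdx (hK : IsKundtShape n g) (q : Fin (n + 3) → ℝ) (k : Fin (n + 1)) :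
    g q (vIdx n) (xIdx n k) = 0 :=
  ((hK.symm q).apply _ _).trans (hK.xv q k)

lemma apply_vIdx_of_ne (hK : IsKundtShape n g) {i : Fin (n + 3)} (hi : i ≠ uIdx n)
    (q : Fin (n + 3) → ℝ) : g q i (vIdx n) = 0 := by
  rcases eq_uIdx_or_xIdx_or_vIdx i with rfl | ⟨k, rfl⟩ | rfl
  · exact absurd rfl hi
  · exact hK.xv q k
  · exact hK.vv q

end IsKundtShape

namespace IsShapeTransform

variable {n : ℕ} {φ : (Fin (n + 3) → ℝ) → Fin (n + 3) → ℝ}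
  {g : (Fin (n + 3) → ℝ) → Matrix (Fin (n + 3)) (Fin (n + 3)) ℝ}

lemma apply_update_vIdx_of_ne (hφ : IsShapeTransform n φ) {i : Fin (n + 3)} (hi : i ≠ vIdx n)
    (q : Fin (n + 3) → ℝ) (s : ℝ) : φ (update q (vIdx n) s) i = φ q i := by
  obtain ⟨C, A, B, -, -, -, -, -, hu, hx, -⟩ := hφ
  rcases eq_uIdx_or_xIdx_or_vIdx i with rfl | ⟨k, rfl⟩ | rfl
  · rw [hu, hu, update_of_ne uIdx_ne_vIdx]
  · rw [hx, hx, update_of_ne uIdx_ne_vIdx, update_vIdx_comp_xIdx]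
  · exact absurd rfl hi

lemma exists_update_vIdx (hφ : IsShapeTransform n φ) (p : Fin (n + 3) → ℝ) :
    ∃ a b : ℝ, ∀ t, φ (update p (vIdx n) t) = update (φ p) (vIdx n) (a * t + b) := by
  obtain ⟨C, A, B, -, -, -, -, -, -, -, hv⟩ := id hφ
  refine ⟨(deriv C (p (uIdx n)))⁻¹, B (p (uIdx n)) fun l => p (xIdx n l),
    fun t => funext fun i => ?_⟩
  by_cases hi : i = vIdx n
  · subst hi
    rw [update_self, hv, update_self, update_of_ne uIdx_ne_vIdx, update_vIdx_comp_xIdx,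
      div_eq_inv_mul]
  · rw [update_of_ne hi, hφ.apply_update_vIdx_of_ne hi]

lemma jacobianMatrix_apply_vIdx_of_ne (hφ : IsShapeTransform n φ) {j : Fin (n + 3)}
    (hj : j ≠ vIdx n) (p : Fin (n + 3) → ℝ) : jacobianMatrix n φ p j (vIdx n) = 0 :=
  partialDeriv'_eq_zero_of_update_eq (f := fun q => φ q j) (hφ.apply_update_vIdx_of_ne hj p)

lemma jacobianMatrix_uIdx_apply_of_ne (hφ : IsShapeTransform n φ) {a : Fin (n + 3)}
    (ha : a ≠ uIdx n) (p : Fin (n + 3) → ℝ) : jacobianMatrix n φ p (uIdx n) a = 0 := by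
  obtain ⟨C, -, -, -, -, -, -, -, hu, -, -⟩ := hφ
  exact partialDeriv'_eq_zero_of_update_eq (f := fun q => φ q (uIdx n))
    fun s => by rw [hu, hu, update_of_ne ha.symm]

lemma jacobianMatrix_eq_zero_of_vWeight_lt (hφ : IsShapeTransform n φ) {i a : Fin (n + 3)}
    (hi : i ≠ vIdx n) (hia : vWeight n a < vWeight n i) (p : Fin (n + 3) → ℝ) :
    jacobianMatrix n φ p i a = 0 := by
  rcases eq_uIdx_or_xIdx_or_vIdx i with rfl | ⟨k, rfl⟩ | rfl
  · exact hφ.jacobianMatrix_uIdx_apply_of_ne (by rintro rfl; simp at hia) p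
  · rcases eq_uIdx_or_xIdx_or_vIdx a with rfl | ⟨l, rfl⟩ | rfl
    · simp at hia
    · simp at hia
    · exact hφ.jacobianMatrix_apply_vIdx_of_ne hi p
  · exact absurd rfl hi

lemma exists_apply_vIdx_eq_mul_add (hφ : IsShapeTransform n φ) :
    ∃ h k : (Fin (n + 3) → ℝ) → ℝ, (∀ q, φ q (vIdx n) = q (vIdx n) * h q + k q) ∧
      (∀ q s, h (update q (vIdx n) s) = h q) ∧ (∀ q s, k (update q (vIdx n) s) = k q) ∧
      ContDiff ℝ ∞ h ∧ ContDiff ℝ ∞ k ∧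
      ∀ q, jacobianMatrix n φ q (uIdx n) (uIdx n) * h q = 1 := by
  obtain ⟨C, A, B, hC, -, hB, hC', -, hu, -, hv⟩ := hφ
  have hu' : ContDiff ℝ ∞ fun q : Fin (n + 3) → ℝ => q (uIdx n) := contDiff_apply ℝ ℝ _
  have hx' : ContDiff ℝ ∞ fun q : Fin (n + 3) → ℝ => fun l => q (xIdx n l) :=
    contDiff_pi.mpr fun l => contDiff_apply ℝ ℝ (xIdx n l)
  refine ⟨fun q => (deriv C (q (uIdx n)))⁻¹, fun q => B (q (uIdx n)) fun l => q (xIdx n l),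
    fun q => by rw [hv, div_eq_mul_inv], fun q s => by simp only [update_of_ne uIdx_ne_vIdx],
    fun q s => by simp only [update_of_ne uIdx_ne_vIdx, update_vIdx_comp_xIdx],
    (((contDiff_infty_iff_deriv.mp hC).2.inv hC').comp hu'), hB.comp (hu'.prodMk hx'),
    fun q => ?_⟩
  have huu : jacobianMatrix n φ q (uIdx n) (uIdx n) = deriv C (q (uIdx n)) := by
    show deriv (fun s => φ (update q (uIdx n) s) (uIdx n)) (q (uIdx n)) = _
    simp only [hu, update_self]
  rw [huu, mul_inv_cancel₀ (hC' _)]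

lemma contDiff (hφ : IsShapeTransform n φ) : ContDiff ℝ ∞ φ := by
  obtain ⟨C, A, B, hC, hA, -, -, -, hu, hx, -⟩ := id hφ
  obtain ⟨a, b, hv, -, -, ha, hb, -⟩ := hφ.exists_apply_vIdx_eq_mul_add
  have hu' : ContDiff ℝ ∞ fun q : Fin (n + 3) → ℝ => q (uIdx n) := contDiff_apply ℝ ℝ _
  have hx' : ContDiff ℝ ∞ fun q : Fin (n + 3) → ℝ => fun l => q (xIdx n l) :=
    contDiff_pi.mpr fun l => contDiff_apply ℝ ℝ (xIdx n l)
  refine contDiff_pi.mpr fun i => ?_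
  rcases eq_uIdx_or_xIdx_or_vIdx i with rfl | ⟨k, rfl⟩ | rfl
  · simpa only [hu, comp_def] using hC.comp hu'
  · simpa only [hx, comp_def] using (hA k).comp (hu'.prodMk hx')
  · simpa only [hv] using ((contDiff_apply ℝ ℝ (vIdx n)).mul ha).add hb

lemma jacobianMatrix_uIdx_uIdx_mul_vIdx_vIdx (hφ : IsShapeTransform n φ)
    (p : Fin (n + 3) → ℝ) :
    jacobianMatrix n φ p (uIdx n) (uIdx n) * jacobianMatrix n φ p (vIdx n) (vIdx n) = 1 := by
  obtain ⟨h, k, hv, hhv, hkv, -, -, hD⟩ := hφ.exists_apply_vIdx_eq_mul_add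
  rw [← hD p]
  congr 1
  exact partialDeriv'_self_of_eq_mul_add hv hhv hkv p

lemma polyDegLE_jacobianMatrix_vIdx (hφ : IsShapeTransform n φ) (p : Fin (n + 3) → ℝ)
    (a : Fin (n + 3)) :
    PolyDegLE (vWeight n a + 1) fun t => jacobianMatrix n φ (update p (vIdx n) t) (vIdx n) a := by
  obtain ⟨h, k, hv, hhv, hkv, hh, hk, -⟩ := hφ.exists_apply_vIdx_eq_mul_add
  by_cases ha : a = vIdx n
  · subst ha
    have hconst : ∀ t, jacobianMatrix n φ (update p (vIdx n) t) (vIdx n) (vIdx n) = h p :=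
      fun t => (partialDeriv'_self_of_eq_mul_add hv hhv hkv _).trans (hhv p t)
    simpa only [hconst] using PolyDegLE.const (by simp) (h p)
  · have haffine : ∀ t, jacobianMatrix n φ (update p (vIdx n) t) (vIdx n) a
        = partialDeriv' n h a p * t + partialDeriv' n k a p :=
      partialDeriv'_update_of_eq_mul_add ha hv hhv hkv (hh.differentiable (by simp))
        (hk.differentiable (by simp)) p
    simpa only [haffine] using
      (PolyDegLE.id.comp_affine _ _).mono (by linarith [vWeight_nonneg ha])

lemma polyDegLE_jacobianMatrix (hφ : IsShapeTransform n φ) (p : Fin (n + 3) → ℝ)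
    (i a : Fin (n + 3)) :
    PolyDegLE (vWeight n a - vWeight n i)
      fun t => jacobianMatrix n φ (update p (vIdx n) t) i a := by
  by_cases hi : i = vIdx n
  · subst hi
    simpa using hφ.polyDegLE_jacobianMatrix_vIdx p a
  have hconst : ∀ t, jacobianMatrix n φ (update p (vIdx n) t) i a = jacobianMatrix n φ p i a :=
    partialDeriv'_update_eq_of_update_eq (f := fun q => φ q i) (hφ.apply_update_vIdx_of_ne hi) a p
  simp only [hconst]
  by_cases hia : 0 ≤ vWeight n a - vWeight n i
  · exact PolyDegLE.const hia _
  · rw [hφ.jacobianMatrix_eq_zero_of_vWeight_lt hi (by omega) p]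
    exact PolyDegLE.zero _

lemma pullbackMetric_uIdx_vIdx (hφ : IsShapeTransform n φ) (hK : IsKundtShape n g)
    (p : Fin (n + 3) → ℝ) : pullbackMetric n φ g p (uIdx n) (vIdx n) = 1 := by
  rw [pullbackMetric, Matrix.transpose_mul_mul_apply_of_eq_zero
    (fun j hj => hφ.jacobianMatrix_apply_vIdx_of_ne hj p) (fun i hi => hK.apply_vIdx_of_ne hi _),
    hK.uv, mul_one, hφ.jacobianMatrix_uIdx_uIdx_mul_vIdx_vIdx]

lemma isUnit_jacobianMatrix_xBlock (hφ : IsShapeTransform n φ) (p : Fin (n + 3) → ℝ) :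
    IsUnit (Matrix.of fun k l => jacobianMatrix n φ p (xIdx n k) (xIdx n l)) := by
  obtain ⟨C, A, B, -, -, -, -, hJ, -, hx, -⟩ := hφ
  convert hJ (p (uIdx n)) (fun l => p (xIdx n l)) using 2
  ext k l
  show deriv (fun s => φ (update p (xIdx n l) s) (xIdx n k)) (p (xIdx n l)) = _
  simp only [hx, update_of_ne (xIdx_ne_uIdx l).symm, update_xIdx_comp_xIdx]

lemma posDef_pullbackMetric_xBlock (hφ : IsShapeTransform n φ) (hK : IsKundtShape n g)
    (p : Fin (n + 3) → ℝ) :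
    (Matrix.of fun k l => pullbackMetric n φ g p (xIdx n k) (xIdx n l)).PosDef := by
  set J := Matrix.of fun k l => jacobianMatrix n φ p (xIdx n k) (xIdx n l)
  have hblock : (Matrix.of fun k l => pullbackMetric n φ g p (xIdx n k) (xIdx n l))
      = Jᴴ * (Matrix.of fun k l => g (φ p) (xIdx n k) (xIdx n l)) * J := by
    ext k l
    simp only [pullbackMetric_apply, sum_univ_eq_uIdx_add_xIdx_add_vIdx, Matrix.of_apply,
      Matrix.mul_apply, Matrix.conjTranspose_apply, star_trivial, J,
      hφ.jacobianMatrix_uIdx_apply_of_ne (xIdx_ne_uIdx _), hK.xv, hK.vv, hK.vIdx_xIdx,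
      mul_zero, zero_mul, add_zero, zero_add, Finset.sum_const_zero, Finset.sum_mul]
    exact Finset.sum_comm
  rw [hblock]
  exact (hK.posDef (φ p)).conjTranspose_mul_mul_same
    (Matrix.mulVec_injective_iff_isUnit.mpr (hφ.isUnit_jacobianMatrix_xBlock p))

theorem hasWeightedVDegree_pullbackMetric (hφ : IsShapeTransform n φ)
    (hg : HasWeightedVDegree n g) : HasWeightedVDegree n (pullbackMetric n φ g) := by
  intro p a b
  obtain ⟨α, β, hline⟩ := hφ.exists_update_vIdx p
  refine PolyDegLE.transpose_mul_mul (vWeight n) (hφ.polyDegLE_jacobianMatrix p)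
    (fun i j => ?_) a b
  simpa only [hline] using (hg (φ p) i j).comp_affine α β

end IsShapeTransform

/-- **Theorem 2.** Shape transformations preserve the class of smooth metrics of degenerate
Kundt shape. -/
theorem shapeTransform_preserves_degenerateKundtShape (n : ℕ)
    (φ : (Fin (n + 3) → ℝ) → Fin (n + 3) → ℝ)
    (g : (Fin (n + 3) → ℝ) → Matrix (Fin (n + 3)) (Fin (n + 3)) ℝ)
    (hφ : IsShapeTransform n φ) (hg : IsDegenerateKundtShape n g) :
    IsDegenerateKundtShape n (pullbackMetric n φ g) := by
  have hw := hg.hasWeightedVDegree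
  obtain ⟨hK, -, -⟩ := hg
  exact .of_hasWeightedVDegree (contDiff_pullbackMetric_apply hφ.contDiff hK.smooth)
    (fun p => pullbackMetric_isSymm (hK.symm _)) (hφ.pullbackMetric_uIdx_vIdx hK)
    (hφ.posDef_pullbackMetric_xBlock hK) (hφ.hasWeightedVDegree_pullbackMetric hw)
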